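/- On the open set {(x,y,z,p,q) ∈ ℝ⁵ : q ≠ 0}, define the 1-forms ω₁ = dy + y dz, ω₂ = −(dp − p dz), ω₃ = −dz, ω₄ = dq + q dz, ω₅ = −(dx − x dz), and s₁ = ω₁ + y²ω₂, s₂ = ω₂, s₃ = ω₃ − 2y ω₂, s̄₃ = s₃ − 2q ω₅, s̄₄ = (1/q)(ω₄ + q²ω₅), s̄₅ = q ω₅. Then the following structure equations hold at every point with q ≠ 0: ds₁ = −s₁∧s̄₃ − 2 s₁∧s̄₅, ds₂ = s₂∧s̄₃ + 2 s₂∧s̄₅, ds̄₃ = −2 s₁∧s₂ − 2 s̄₄∧s̄₅, ds̄₄ = s̄₄∧s̄₅, ds̄₅ = s̄₄∧s̄₅. -/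

import Mathlib

/-!
Everything follows from the Leibniz rule `d(f ω) = df ∧ ω + f dω`. Applied to the coordinate
expressions it gives `dω₁ = ω₃ ∧ ω₁`, `dω₂ = ω₂ ∧ ω₃`, `dω₃ = 0`, `dω₄ = ω₃ ∧ ω₄`,
`dω₅ = ω₅ ∧ ω₃`; applied once more, with `dy = ω₁ + y ω₃` and `dq = ω₄ + q ω₃`, it gives the
`sl₂` equations `ds₁ = s₃ ∧ s₁`, `ds₂ = s₂ ∧ s₃`, `ds₃ = -2 s₁ ∧ s₂` and, where `q ≠ 0`,
`ds̄₄ = ds̄₅ = s̄₄ ∧ s̄₅`. The two systems are coupled only through `s̄₃ = s₃ - 2 s̄₅`.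
-/

noncomputable section

/-- coordinate differentials dx, dy, dz, dp, dq on ℝ⁵ -/
def dc (i : Fin 5) : (Fin 5 → ℝ) →L[ℝ] ℝ := ContinuousLinearMap.proj i

/-- exterior derivative of a 1-form -/
def extd {n : ℕ} (ω : (Fin n → ℝ) → ((Fin n → ℝ) →L[ℝ] ℝ)) :
    (Fin n → ℝ) → (Fin n → ℝ) → (Fin n → ℝ) → ℝ :=
  fun a u v => fderiv ℝ (fun x => ω x v) a u - fderiv ℝ (fun x => ω x u) a v

/-- wedge product of two 1-forms -/
def wedge {n : ℕ} (ω η : (Fin n → ℝ) → ((Fin n → ℝ) →L[ℝ] ℝ)) :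
    (Fin n → ℝ) → (Fin n → ℝ) → (Fin n → ℝ) → ℝ :=
  fun a u v => ω a u * η a v - ω a v * η a u

/-- ω₁ = dy + y dz -/
def ω₁ : (Fin 5 → ℝ) → ((Fin 5 → ℝ) →L[ℝ] ℝ) := fun a => dc 1 + a 1 • dc 2

/-- ω₂ = −(dp − p dz) -/
def ω₂ : (Fin 5 → ℝ) → ((Fin 5 → ℝ) →L[ℝ] ℝ) := fun a => -(dc 3 - a 3 • dc 2)

/-- ω₃ = −dz -/
def ω₃ : (Fin 5 → ℝ) → ((Fin 5 → ℝ) →L[ℝ] ℝ) := fun _ => -dc 2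

/-- ω₄ = dq + q dz -/
def ω₄ : (Fin 5 → ℝ) → ((Fin 5 → ℝ) →L[ℝ] ℝ) := fun a => dc 4 + a 4 • dc 2

/-- ω₅ = −(dx − x dz) -/
def ω₅ : (Fin 5 → ℝ) → ((Fin 5 → ℝ) →L[ℝ] ℝ) := fun a => -(dc 0 - a 0 • dc 2)

/-- s₁ = ω₁ + y²ω₂ -/
def s₁ : (Fin 5 → ℝ) → ((Fin 5 → ℝ) →L[ℝ] ℝ) := fun a => ω₁ a + (a 1)^2 • ω₂ a

/-- s₂ = ω₂ -/
def s₂ : (Fin 5 → ℝ) → ((Fin 5 → ℝ) →L[ℝ] ℝ) := ω₂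

/-- s₃ = ω₃ − 2y ω₂ -/
def s₃ : (Fin 5 → ℝ) → ((Fin 5 → ℝ) →L[ℝ] ℝ) := fun a => ω₃ a - (2 * a 1) • ω₂ a

/-- s̄₃ = s₃ − 2q ω₅ -/
def sb₃ : (Fin 5 → ℝ) → ((Fin 5 → ℝ) →L[ℝ] ℝ) := fun a => s₃ a - (2 * a 4) • ω₅ a

/-- s̄₄ = (1/q)(ω₄ + q²ω₅) -/
def sb₄ : (Fin 5 → ℝ) → ((Fin 5 → ℝ) →L[ℝ] ℝ) :=
  fun a => (1 / a 4) • (ω₄ a + (a 4)^2 • ω₅ a)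

/-- s̄₅ = q ω₅ -/
def sb₅ : (Fin 5 → ℝ) → ((Fin 5 → ℝ) →L[ℝ] ℝ) := fun a => a 4 • ω₅ a

section ExteriorDerivative

open ContinuousLinearMap

variable {n : ℕ} {ω η : (Fin n → ℝ) → ((Fin n → ℝ) →L[ℝ] ℝ)} {f : (Fin n → ℝ) → ℝ}
  {a : Fin n → ℝ}

theorem fderiv_coord (i : Fin n) (a : Fin n → ℝ) :
    fderiv ℝ (fun x : Fin n → ℝ => x i) a = proj i :=
  (hasFDerivAt_apply i a).fderiv

theorem fderiv_coord_sq (i : Fin n) (a : Fin n → ℝ) :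
    fderiv ℝ (fun x : Fin n → ℝ => x i ^ 2) a = (2 * a i) • proj i := by
  simpa [Function.comp_def] using
    ((hasDerivAt_pow 2 (a i)).comp_hasFDerivAt a (hasFDerivAt_apply (𝕜 := ℝ) i a)).fderiv

theorem fderiv_one_div_coord {i : Fin n} (h : a i ≠ 0) :
    fderiv ℝ (fun x : Fin n → ℝ => 1 / x i) a = -(a i ^ 2)⁻¹ • proj i := by
  simpa only [one_div, Function.comp_def] using
    ((hasDerivAt_inv h).comp_hasFDerivAt a (hasFDerivAt_apply i a)).fderiv

theorem extd_eq_fderiv (hω : DifferentiableAt ℝ ω a) (u v : Fin n → ℝ) :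
    extd ω a u v = fderiv ℝ ω a u v - fderiv ℝ ω a v u := by
  simp [extd, fderiv_clm_apply hω (differentiableAt_const _)]

theorem extd_const (α : (Fin n → ℝ) →L[ℝ] ℝ) (u v : Fin n → ℝ) :
    extd (fun _ => α) a u v = 0 := by
  simp [extd]

theorem extd_neg (u v : Fin n → ℝ) : extd (fun x => -ω x) a u v = -extd ω a u v := by
  simp only [extd, neg_apply, fderiv_fun_neg]
  ring

theorem extd_add (hω : DifferentiableAt ℝ ω a) (hη : DifferentiableAt ℝ η a) (u v : Fin n → ℝ) :
    extd (fun x => ω x + η x) a u v = extd ω a u v + extd η a u v := by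
  simp only [extd_eq_fderiv (hω.fun_add hη), extd_eq_fderiv hω, extd_eq_fderiv hη,
    fderiv_fun_add hω hη, add_apply]
  ring

theorem extd_sub (hω : DifferentiableAt ℝ ω a) (hη : DifferentiableAt ℝ η a) (u v : Fin n → ℝ) :
    extd (fun x => ω x - η x) a u v = extd ω a u v - extd η a u v := by
  simp only [extd_eq_fderiv (hω.fun_sub hη), extd_eq_fderiv hω, extd_eq_fderiv hη,
    fderiv_fun_sub hω hη, sub_apply]
  ring

theorem extd_smul (hf : DifferentiableAt ℝ f a) (hω : DifferentiableAt ℝ ω a) (u v : Fin n → ℝ) :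
    extd (fun x => f x • ω x) a u v = wedge (fderiv ℝ f) ω a u v + f a * extd ω a u v := by
  simp only [extd_eq_fderiv (hf.fun_smul hω), extd_eq_fderiv hω, fderiv_fun_smul hf hω, wedge,
    add_apply, smul_apply, smulRight_apply, smul_eq_mul]
  ring

theorem extd_const_smul (c : ℝ) (hω : DifferentiableAt ℝ ω a) (u v : Fin n → ℝ) :
    extd (fun x => c • ω x) a u v = c * extd ω a u v := by
  simp [extd_smul (differentiableAt_const c) hω, wedge]

end ExteriorDerivative

section Coframe

open ContinuousLinearMap

variable (x w : Fin 5 → ℝ)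

theorem dc_apply (i : Fin 5) : dc i w = w i := rfl

theorem ω₁_apply : ω₁ x w = w 1 + x 1 * w 2 := rfl
theorem ω₂_apply : ω₂ x w = x 3 * w 2 - w 3 := by simp [ω₂, dc_apply]
theorem ω₃_apply : ω₃ x w = -w 2 := rfl
theorem ω₄_apply : ω₄ x w = w 4 + x 4 * w 2 := rfl
theorem ω₅_apply : ω₅ x w = x 0 * w 2 - w 0 := by simp [ω₅, dc_apply]
theorem s₁_apply : s₁ x w = ω₁ x w + x 1 ^ 2 * ω₂ x w := rfl
theorem s₃_apply : s₃ x w = ω₃ x w - 2 * x 1 * ω₂ x w := rfl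
theorem sb₄_apply : sb₄ x w = 1 / x 4 * (ω₄ x w + x 4 ^ 2 * ω₅ x w) := rfl
theorem sb₅_apply : sb₅ x w = x 4 * ω₅ x w := rfl

@[fun_prop] theorem differentiable_ω₁ : Differentiable ℝ ω₁ := by unfold ω₁; fun_prop
@[fun_prop] theorem differentiable_ω₂ : Differentiable ℝ ω₂ := by unfold ω₂; fun_prop
@[fun_prop] theorem differentiable_ω₃ : Differentiable ℝ ω₃ := by unfold ω₃; fun_prop
@[fun_prop] theorem differentiable_ω₄ : Differentiable ℝ ω₄ := by unfold ω₄; fun_prop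
@[fun_prop] theorem differentiable_ω₅ : Differentiable ℝ ω₅ := by unfold ω₅; fun_prop
@[fun_prop] theorem differentiable_s₃ : Differentiable ℝ s₃ := by unfold s₃; fun_prop
@[fun_prop] theorem differentiable_sb₅ : Differentiable ℝ sb₅ := by unfold sb₅; fun_prop

theorem sb₃_eq_sub : sb₃ = fun x => s₃ x - (2 : ℝ) • sb₅ x := by
  funext x
  simp only [sb₃, sb₅, smul_smul]

variable (a u v : Fin 5 → ℝ)

theorem extd_ω₁ : extd ω₁ a u v = wedge ω₃ ω₁ a u v := by
  conv_lhs => unfold ω₁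
  simp (disch := fun_prop) only [extd_add, extd_smul, extd_const]
  simp only [wedge, fderiv_coord, proj_apply, dc_apply, ω₁_apply, ω₃_apply]
  ring

theorem extd_ω₂ : extd ω₂ a u v = wedge ω₂ ω₃ a u v := by
  conv_lhs => unfold ω₂
  simp (disch := fun_prop) only [extd_neg, extd_sub, extd_smul, extd_const]
  simp only [wedge, fderiv_coord, proj_apply, dc_apply, ω₂_apply, ω₃_apply]
  ring

theorem extd_ω₃ : extd ω₃ a u v = 0 := extd_const _ u v

theorem extd_ω₄ : extd ω₄ a u v = wedge ω₃ ω₄ a u v := by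
  conv_lhs => unfold ω₄
  simp (disch := fun_prop) only [extd_add, extd_smul, extd_const]
  simp only [wedge, fderiv_coord, proj_apply, dc_apply, ω₃_apply, ω₄_apply]
  ring

theorem extd_ω₅ : extd ω₅ a u v = wedge ω₅ ω₃ a u v := by
  conv_lhs => unfold ω₅
  simp (disch := fun_prop) only [extd_neg, extd_sub, extd_smul, extd_const]
  simp only [wedge, fderiv_coord, proj_apply, dc_apply, ω₃_apply, ω₅_apply]
  ring

theorem extd_s₁ : extd s₁ a u v = wedge s₃ s₁ a u v := by
  conv_lhs => unfold s₁
  simp (disch := fun_prop) only [extd_add, extd_smul, extd_ω₁, extd_ω₂]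
  simp only [wedge, fderiv_coord_sq, smul_apply, proj_apply, smul_eq_mul, s₁_apply, s₃_apply,
    ω₁_apply, ω₂_apply, ω₃_apply]
  ring

theorem extd_s₂ : extd s₂ a u v = wedge s₂ s₃ a u v := by
  simp only [s₂, extd_ω₂, wedge, s₃_apply]
  ring

theorem extd_s₃ : extd s₃ a u v = -2 * wedge s₁ s₂ a u v := by
  conv_lhs => unfold s₃
  simp (disch := fun_prop) only [extd_sub, extd_smul, extd_ω₂, extd_ω₃]
  simp (disch := fun_prop) only [wedge, fderiv_const_mul, fderiv_coord, smul_apply, proj_apply,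
    smul_eq_mul, s₁_apply, s₂, ω₁_apply, ω₂_apply, ω₃_apply]
  ring

theorem extd_sb₅ (ha : a 4 ≠ 0) : extd sb₅ a u v = wedge sb₄ sb₅ a u v := by
  conv_lhs => unfold sb₅
  simp (disch := fun_prop) only [extd_smul, extd_ω₅]
  simp only [wedge, fderiv_coord, proj_apply, sb₄_apply, sb₅_apply, ω₃_apply, ω₄_apply, ω₅_apply]
  field_simp
  ring

theorem extd_sb₄ (ha : a 4 ≠ 0) : extd sb₄ a u v = wedge sb₄ sb₅ a u v := by
  conv_lhs => unfold sb₄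
  simp (disch := fun_prop (disch := assumption)) only [extd_smul, extd_add, extd_ω₄, extd_ω₅]
  simp only [wedge, fderiv_one_div_coord ha, fderiv_coord_sq, smul_apply, proj_apply, smul_eq_mul,
    add_apply, sb₄_apply, sb₅_apply, ω₃_apply, ω₄_apply, ω₅_apply]
  field_simp
  ring

theorem extd_sb₃ (ha : a 4 ≠ 0) :
    extd sb₃ a u v = -2 * wedge s₁ s₂ a u v - 2 * wedge sb₄ sb₅ a u v := by
  rw [sb₃_eq_sub]
  simp (disch := fun_prop) only [extd_sub, extd_const_smul, extd_s₃, extd_sb₅ a u v ha]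

end Coframe

theorem two_sl2_copies_structure_equations :
    ∀ a : Fin 5 → ℝ, a 4 ≠ 0 → ∀ u v : Fin 5 → ℝ,
      extd s₁ a u v = -(wedge s₁ sb₃ a u v) - 2 * wedge s₁ sb₅ a u v ∧
      extd s₂ a u v = wedge s₂ sb₃ a u v + 2 * wedge s₂ sb₅ a u v ∧
      extd sb₃ a u v = -2 * wedge s₁ s₂ a u v - 2 * wedge sb₄ sb₅ a u v ∧
      extd sb₄ a u v = wedge sb₄ sb₅ a u v ∧
      extd sb₅ a u v = wedge sb₄ sb₅ a u v := by
  intro a ha u v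
  have hs₃ (w : Fin 5 → ℝ) : s₃ a w = sb₃ a w + 2 * sb₅ a w := by simp [sb₃_eq_sub]
  refine ⟨?_, ?_, extd_sb₃ a u v ha, extd_sb₄ a u v ha, extd_sb₅ a u v ha⟩
  · rw [extd_s₁]
    simp only [wedge, hs₃]
    ring
  · rw [extd_s₂]
    simp only [wedge, hs₃]
    ring

end
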